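/- Let x₂ be the positive root of c^μ x − α c^μ + λ x^{1−μ} = 0 with 0 < μ < 1, λ, c, α > 0. Then the function ψ(u) = (1 − x₂/α) e^{−x₂ u} satisfies the integro-differential equation c^μ · C_D_∞^μ[ψ](u) + λψ(u) = λ[∫_0^u ψ(u−y) α e^{−αy} dy + e^{−αu}] for all u > 0. -/

import Mathlib

open MeasureTheory intervalIntegral

/-- Right Caputo fractional derivative of order `r` with upper limit `∞`. -/
noncomputable def caputoInf (r : ℝ) (f : ℝ → ℝ) : ℝ → ℝ :=
  fun x => ((-1 : ℝ) ^ (⌊r⌋₊ + 1) / Real.Gamma ((⌊r⌋₊ + 1 : ℕ) - r)) *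
    ∫ y in Set.Ioi x,
      (y - x) ^ (((⌊r⌋₊ + 1 : ℕ) : ℝ) - r - 1) * iteratedDeriv (⌊r⌋₊ + 1) f y

/-! Both sides are multiples of `e^{-x₂ u}`: the Caputo derivative acts on `e^{-b v}` as
multiplication by `b^μ`, and the convolution of `e^{-x₂ v}` with the Exp(α) density is
`α/(α - x₂) (e^{-x₂ u} - e^{-α u})`, whose `e^{-α u}` part cancels the free term.
Comparing the coefficients of `e^{-x₂ u}` leaves the root equation multiplied by `x₂^μ`. -/

open Real Set

theorem integral_Ioi_eq_integral_Ioi_zero_comp_add {E : Type*} [NormedAddCommGroup E]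
    [NormedSpace ℝ E] (u : ℝ) (g : ℝ → E) :
    ∫ y in Ioi u, g y = ∫ t in Ioi 0, g (t + u) := by
  rw [← (measurePreserving_add_right volume u).setIntegral_image_emb
    (measurableEmbedding_addRight u)]
  simp

theorem integral_Ioi_rpow_sub_mul_exp_neg_mul {a b : ℝ} (ha : 0 < a) (hb : 0 < b) (u : ℝ) :
    ∫ y in Ioi u, (y - u) ^ (a - 1) * exp (-b * y) = exp (-b * u) * ((1 / b) ^ a * Gamma a) := by
  rw [integral_Ioi_eq_integral_Ioi_zero_comp_add, ← integral_rpow_mul_exp_neg_mul_Ioi ha hb,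
    ← MeasureTheory.integral_const_mul]
  congr 1 with t
  rw [add_sub_cancel_right, mul_add, exp_add, neg_mul, neg_mul]
  ring

theorem caputoInf_const_mul_exp_neg_mul (r C : ℝ) {b : ℝ} (hb : 0 < b) (u : ℝ) :
    caputoInf r (fun v => C * exp (-b * v)) u = C * b ^ r * exp (-b * u) := by
  have hn : 0 < ((⌊r⌋₊ + 1 : ℕ) : ℝ) - r := by
    push_cast
    exact sub_pos.2 (Nat.lt_floor_add_one r)
  have hderiv : iteratedDeriv (⌊r⌋₊ + 1) (fun v => C * exp (-b * v))
      = fun y => C * (-b) ^ (⌊r⌋₊ + 1) * exp (-b * y) := by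
    ext y
    rw [iteratedDeriv_const_mul_field, iteratedDeriv_exp_const_mul, mul_assoc]
  have hpow : (1 / b) ^ (((⌊r⌋₊ + 1 : ℕ) : ℝ) - r) * b ^ (⌊r⌋₊ + 1) = b ^ r := by
    rw [one_div, inv_rpow hb.le, ← rpow_neg hb.le, ← rpow_natCast, ← rpow_add hb]
    ring_nf
  have hsign : (-1 : ℝ) ^ (⌊r⌋₊ + 1) * (-b) ^ (⌊r⌋₊ + 1) = b ^ (⌊r⌋₊ + 1) := by
    rw [← mul_pow]
    ring_nf
  unfold caputoInf
  simp_rw [hderiv, mul_left_comm _ (C * _), MeasureTheory.integral_const_mul,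
    integral_Ioi_rpow_sub_mul_exp_neg_mul hn hb]
  rw [← hpow, ← hsign]
  field_simp [(Gamma_pos_of_pos hn).ne']

theorem integral_exp_neg_mul_sub_mul_exp_neg_mul {x α : ℝ} (h : x ≠ α) (u : ℝ) :
    ∫ y in (0 : ℝ)..u, exp (-x * (u - y)) * (α * exp (-α * y))
      = α / (α - x) * (exp (-x * u) - exp (-α * u)) := by
  have hF : ∀ y, HasDerivAt (fun y => α / (x - α) * exp (-x * u + y * (x - α)))
      (exp (-x * (u - y)) * (α * exp (-α * y))) y := by
    intro y
    refine (((hasDerivAt_mul_const (x - α)).const_add (-x * u)).exp.const_mul _).congr_deriv ?_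
    rw [show -x * u + y * (x - α) = -x * (u - y) + -α * y by ring, exp_add]
    field_simp
  rw [integral_eq_sub_of_hasDerivAt (fun y _ => hF y)
    (Continuous.intervalIntegrable (by fun_prop) _ _)]
  field_simp
  ring_nf

theorem stmt14_general (mu lam c α x₂ : ℝ)
    (hlam : 0 < lam) (hα : 0 < α) (hx₂ : 0 < x₂)
    (hroot : c ^ mu * x₂ - α * c ^ mu + lam * x₂ ^ (1 - mu) = 0) :
    ∀ u > (0 : ℝ),
      c ^ mu * caputoInf mu (fun v => (1 - x₂ / α) * Real.exp (-x₂ * v)) u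
          + lam * ((1 - x₂ / α) * Real.exp (-x₂ * u))
        = lam * ((∫ y in (0:ℝ)..u,
              (1 - x₂ / α) * Real.exp (-x₂ * (u - y)) * (α * Real.exp (-α * y)))
            + Real.exp (-α * u)) := by
  intro u _
  have hne : x₂ ≠ α := by
    rintro rfl
    have : 0 < lam * x₂ ^ (1 - mu) := by positivity
    linarith
  have hcoeff : c ^ mu * x₂ ^ mu * (α - x₂) = lam * x₂ := by
    have hsplit : x₂ ^ mu * x₂ ^ (1 - mu) = x₂ := by
      rw [← rpow_add hx₂, add_sub_cancel, rpow_one]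
    linear_combination -x₂ ^ mu * hroot + lam * hsplit
  simp_rw [caputoInf_const_mul_exp_neg_mul _ _ hx₂, mul_assoc (1 - x₂ / α),
    intervalIntegral.integral_const_mul, integral_exp_neg_mul_sub_mul_exp_neg_mul hne, neg_mul]
  field_simp
  linear_combination exp (-(x₂ * u)) * hcoeff

/-- In the fractional Poisson risk model with Exp(α) claims, with `x₂` the positive
root of `c^μ x − α c^μ + λ x^{1−μ} = 0`, the function `ψ(u) = (1 − x₂/α) e^{−x₂ u}`
satisfies `c^μ C_D_∞^μ[ψ](u) + λψ(u) = λ[∫_0^u ψ(u−y) α e^{−αy} dy + e^{−αu}]`. -/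
theorem stmt14 (mu lam c α x₂ : ℝ) (hmu0 : 0 < mu) (hmu1 : mu < 1)
    (hlam : 0 < lam) (hc : 0 < c) (hα : 0 < α) (hx₂ : 0 < x₂)
    (hroot : c ^ mu * x₂ - α * c ^ mu + lam * x₂ ^ (1 - mu) = 0) :
    ∀ u > (0 : ℝ),
      c ^ mu * caputoInf mu (fun v => (1 - x₂ / α) * Real.exp (-x₂ * v)) u
          + lam * ((1 - x₂ / α) * Real.exp (-x₂ * u))
        = lam * ((∫ y in (0:ℝ)..u,
              (1 - x₂ / α) * Real.exp (-x₂ * (u - y)) * (α * Real.exp (-α * y)))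
            + Real.exp (-α * u)) :=
  stmt14_general mu lam c α x₂ hlam hα hx₂ hroot
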